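/- arXiv:2012.04805 — 3 statements merged into one kernel-verified Lean document; each statement's English description precedes it below -/
import Mathlib

section
/- Let 0 < s < 1/2, iκ² ∈ ℝ with |κ| ≥ 1, and f ∈ H^{-s-1/2}_κ. Then the operator (∂+iκ²)^{-s-1/2} ∘ (multiplication by f) ∘ (∂-iκ²)^{-s-1/2} is bounded on L²(ℝ) with operator norm ≲ |κ|^{-2s} ‖f‖_{H^{-s-1/2}_κ}. -/
open MeasureTheory Complex Filter

/-- The Fourier transform with the paper's normalization:
`f̂(ξ) = (2π)^{-1/2} ∫ e^{-iξx} f(x) dx`. -/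
noncomputable def ft (f : ℝ → ℂ) (ξ : ℝ) : ℂ :=
  (↑(Real.sqrt (2 * Real.pi)))⁻¹ * ∫ x : ℝ, Complex.exp (-Complex.I * (ξ : ℂ) * (x : ℂ)) * f x

/-- The square of the weighted Sobolev norm `‖f‖²_{H^σ_κ} = ∫ (4|κ|⁴+ξ²)^σ |f̂(ξ)|² dξ`,
where `w = |κ|`. -/
noncomputable def sobNormSq (w σ : ℝ) (f : ℝ → ℂ) : ℝ :=
  ∫ ξ : ℝ, (4 * w ^ 4 + ξ ^ 2) ^ σ * ‖ft f ξ‖ ^ 2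

/-!
With `σ = s + 1/2` and `⟨t⟩ = (|κ|⁴ + t²)^{1/2}`, the form has the kernel
`⟨ξ⟩^{-σ} f̂(ξ - η) ⟨η⟩^{-σ}` on the Fourier side. Peetre's inequality
`(4|κ|⁴ + (ξ - η)²)^{σ/2} ≤ 4^{σ/2} (⟨ξ⟩^σ + ⟨η⟩^σ)` bounds its modulus by
`4^{σ/2} (⟨ξ⟩^{-σ} + ⟨η⟩^{-σ}) g(ξ - η)` with `g = (4|κ|⁴ + ·²)^{-σ/2} |f̂|`, whose `L²` norm is
`‖f‖_{H^{-σ}_κ}`. In each of the two terms, Cauchy–Schwarz in the convolution variable and then in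
the remaining one gives `‖φ‖₂ ‖g‖₂ ‖⟨·⟩^{-σ}‖₂ ‖ψ‖₂`, and `σ > 1/2` makes
`‖⟨·⟩^{-σ}‖₂ = |κ|^{1 - 2σ} ‖(1 + ·²)^{-σ/2}‖₂ = |κ|^{-2s} ‖(1 + ·²)^{-σ/2}‖₂` finite.
-/

open scoped ENNReal

section Convolution

variable {F G H : ℝ → ℝ≥0∞}

theorem lintegral_mul_le_eLpNorm'_mul_eLpNorm' (hF : AEMeasurable F) (hG : AEMeasurable G) :
    ∫⁻ x, F x * G x ≤ eLpNorm' F 2 volume * eLpNorm' G 2 volume :=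
  ENNReal.lintegral_mul_le_Lp_mul_Lq volume .two_two hF hG

theorem eLpNorm'_comp_sub_right (G : ℝ → ℝ≥0∞) (η : ℝ) :
    eLpNorm' (fun ξ => G (ξ - η)) 2 volume = eLpNorm' G 2 volume := by
  simp only [eLpNorm', lintegral_sub_right_eq_self (fun ζ => ‖G ζ‖ₑ ^ (2:ℝ)) η]

theorem eLpNorm'_comp_sub_left (G : ℝ → ℝ≥0∞) (ξ : ℝ) :
    eLpNorm' (fun η => G (ξ - η)) 2 volume = eLpNorm' G 2 volume := by
  simp only [eLpNorm', lintegral_sub_left_eq_self (fun ζ => ‖G ζ‖ₑ ^ (2:ℝ)) ξ]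

theorem lintegral_lintegral_mul_sub_le_of_L2_L1 (hF : Measurable F) (hG : Measurable G)
    (hH : Measurable H) :
    ∫⁻ ξ, ∫⁻ η, F ξ * G (ξ - η) * H η ≤
      eLpNorm' F 2 volume * eLpNorm' G 2 volume * ∫⁻ η, H η := by
  rw [lintegral_lintegral_swap (by fun_prop)]
  calc ∫⁻ η, ∫⁻ ξ, F ξ * G (ξ - η) * H η
      = ∫⁻ η, (∫⁻ ξ, F ξ * G (ξ - η)) * H η :=
        lintegral_congr fun η => lintegral_mul_const _ (by fun_prop)
    _ ≤ ∫⁻ η, eLpNorm' F 2 volume * eLpNorm' G 2 volume * H η := by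
        gcongr with η
        rw [← eLpNorm'_comp_sub_right G η]
        exact lintegral_mul_le_eLpNorm'_mul_eLpNorm' hF.aemeasurable (by fun_prop)
    _ = _ := lintegral_const_mul _ hH

theorem lintegral_lintegral_mul_sub_le_of_L1_L2 (hF : Measurable F) (hG : Measurable G)
    (hH : Measurable H) :
    ∫⁻ ξ, ∫⁻ η, F ξ * G (ξ - η) * H η ≤
      (∫⁻ ξ, F ξ) * (eLpNorm' G 2 volume * eLpNorm' H 2 volume) := by
  calc ∫⁻ ξ, ∫⁻ η, F ξ * G (ξ - η) * H η
      = ∫⁻ ξ, F ξ * ∫⁻ η, G (ξ - η) * H η := by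
        refine lintegral_congr fun ξ => ?_
        simp_rw [mul_assoc]
        exact lintegral_const_mul _ (by fun_prop)
    _ ≤ ∫⁻ ξ, F ξ * (eLpNorm' G 2 volume * eLpNorm' H 2 volume) := by
        gcongr with ξ
        rw [← eLpNorm'_comp_sub_left G ξ]
        exact lintegral_mul_le_eLpNorm'_mul_eLpNorm' (by fun_prop) hH.aemeasurable
    _ = _ := lintegral_mul_const _ hF

theorem lintegral_lintegral_le_of_le_weighted_conv {K : ℝ → ℝ → ℝ≥0∞} {Φ Ψ A G : ℝ → ℝ≥0∞}
    {c : ℝ≥0∞} (hΦ : Measurable Φ) (hΨ : Measurable Ψ) (hA : Measurable A) (hG : Measurable G)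
    (hK : ∀ ξ η, K ξ η ≤ c * (A ξ + A η) * (Φ ξ * G (ξ - η) * Ψ η)) :
    ∫⁻ ξ, ∫⁻ η, K ξ η ≤ 2 * c * (eLpNorm' Φ 2 volume * eLpNorm' G 2 volume *
      eLpNorm' A 2 volume * eLpNorm' Ψ 2 volume) := by
  calc ∫⁻ ξ, ∫⁻ η, K ξ η
      ≤ ∫⁻ ξ, ∫⁻ η, c * (Φ ξ * G (ξ - η) * (A η * Ψ η) + (Φ ξ * A ξ) * G (ξ - η) * Ψ η) := by
        gcongr with ξ η
        exact (hK ξ η).trans_eq (by ring)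
    _ = c * ((∫⁻ ξ, ∫⁻ η, Φ ξ * G (ξ - η) * (A η * Ψ η)) +
          ∫⁻ ξ, ∫⁻ η, (Φ ξ * A ξ) * G (ξ - η) * Ψ η) := by
        rw [← lintegral_add_left (by fun_prop), ← lintegral_const_mul _ (by fun_prop)]
        refine lintegral_congr fun ξ => ?_
        rw [← lintegral_add_left (by fun_prop), ← lintegral_const_mul _ (by fun_prop)]
    _ ≤ c * (eLpNorm' Φ 2 volume * eLpNorm' G 2 volume * (∫⁻ η, A η * Ψ η) +
          (∫⁻ ξ, Φ ξ * A ξ) * (eLpNorm' G 2 volume * eLpNorm' Ψ 2 volume)) := by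
        gcongr _ * (?_ + ?_)
        · exact lintegral_lintegral_mul_sub_le_of_L2_L1 hΦ hG (by fun_prop)
        · exact lintegral_lintegral_mul_sub_le_of_L1_L2 (by fun_prop) hG hΨ
    _ ≤ c * (eLpNorm' Φ 2 volume * eLpNorm' G 2 volume *
            (eLpNorm' A 2 volume * eLpNorm' Ψ 2 volume) +
          (eLpNorm' Φ 2 volume * eLpNorm' A 2 volume) *
            (eLpNorm' G 2 volume * eLpNorm' Ψ 2 volume)) := by
        gcongr _ * (_ * ?_ + ?_ * _)
        · exact lintegral_mul_le_eLpNorm'_mul_eLpNorm' hA.aemeasurable hΨ.aemeasurable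
        · exact lintegral_mul_le_eLpNorm'_mul_eLpNorm' hΦ.aemeasurable hA.aemeasurable
    _ = _ := by ring

theorem eLpNorm'_ofReal_eq_sqrt_integral_sq {u : ℝ → ℝ} (hu0 : ∀ x, 0 ≤ u x)
    (hu : Integrable fun x => u x ^ 2) :
    eLpNorm' (fun x => ENNReal.ofReal (u x)) 2 volume = ENNReal.ofReal √(∫ x, u x ^ 2) := by
  have hsq (x : ℝ) : ENNReal.ofReal (u x) ^ (2:ℝ) = ENNReal.ofReal (u x ^ 2) := by
    rw [ENNReal.ofReal_rpow_of_nonneg (hu0 x) zero_le_two, Real.rpow_two]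
  simp only [eLpNorm', enorm_eq_self, hsq]
  rw [← ofReal_integral_eq_lintegral_ofReal hu (ae_of_all _ fun x => sq_nonneg _),
    ENNReal.ofReal_rpow_of_nonneg (integral_nonneg fun x => sq_nonneg _) (by norm_num),
    Real.sqrt_eq_rpow]

theorem norm_integral_integral_le_of_le_weighted_conv {E : Type*} [NormedAddCommGroup E]
    [NormedSpace ℝ E] {K : ℝ → ℝ → E} {u v a g : ℝ → ℝ} {c : ℝ} (hc : 0 ≤ c)
    (hu : Measurable u) (hv : Measurable v) (ha : Measurable a) (hg : Measurable g)
    (hu0 : ∀ x, 0 ≤ u x) (hv0 : ∀ x, 0 ≤ v x) (ha0 : ∀ x, 0 ≤ a x) (hg0 : ∀ x, 0 ≤ g x)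
    (hu2 : Integrable fun x => u x ^ 2) (hv2 : Integrable fun x => v x ^ 2)
    (ha2 : Integrable fun x => a x ^ 2) (hg2 : Integrable fun x => g x ^ 2)
    (hK : ∀ ξ η, ‖K ξ η‖ ≤ c * (a ξ + a η) * (u ξ * g (ξ - η) * v η)) :
    ‖∫ ξ, ∫ η, K ξ η‖ ≤ 2 * c * (√(∫ x, u x ^ 2) * √(∫ x, g x ^ 2) * √(∫ x, a x ^ 2) *
      √(∫ x, v x ^ 2)) := by
  rw [← ENNReal.ofReal_le_ofReal_iff (by positivity), ofReal_norm]
  calc ‖∫ ξ, ∫ η, K ξ η‖ₑ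
      ≤ ∫⁻ ξ, ‖∫ η, K ξ η‖ₑ := enorm_integral_le_lintegral_enorm _
    _ ≤ ∫⁻ ξ, ∫⁻ η, ‖K ξ η‖ₑ := lintegral_mono fun ξ => enorm_integral_le_lintegral_enorm _
    _ ≤ 2 * ENNReal.ofReal c * (eLpNorm' (fun x => ENNReal.ofReal (u x)) 2 volume *
          eLpNorm' (fun x => ENNReal.ofReal (g x)) 2 volume *
          eLpNorm' (fun x => ENNReal.ofReal (a x)) 2 volume *
          eLpNorm' (fun x => ENNReal.ofReal (v x)) 2 volume) := by
        refine lintegral_lintegral_le_of_le_weighted_conv (by fun_prop) (by fun_prop)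
          (by fun_prop) (by fun_prop) fun ξ η => ?_
        rw [← ofReal_norm]
        refine (ENNReal.ofReal_le_ofReal (hK ξ η)).trans_eq ?_
        rw [ENNReal.ofReal_mul (mul_nonneg hc (add_nonneg (ha0 ξ) (ha0 η))), ENNReal.ofReal_mul hc,
          ENNReal.ofReal_add (ha0 ξ) (ha0 η), ENNReal.ofReal_mul (mul_nonneg (hu0 ξ) (hg0 _)),
          ENNReal.ofReal_mul (hu0 ξ)]
    _ = _ := by
        rw [eLpNorm'_ofReal_eq_sqrt_integral_sq hu0 hu2,
          eLpNorm'_ofReal_eq_sqrt_integral_sq hv0 hv2,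
          eLpNorm'_ofReal_eq_sqrt_integral_sq ha0 ha2, eLpNorm'_ofReal_eq_sqrt_integral_sq hg0 hg2]
        rw [ENNReal.ofReal_mul (by positivity), ENNReal.ofReal_mul (by positivity),
          ENNReal.ofReal_mul (by positivity), ENNReal.ofReal_mul (by positivity),
          ENNReal.ofReal_mul (by positivity), ENNReal.ofReal_ofNat]

end Convolution

section Weights

theorem rpow_four_mul_add_sub_sq_le {a p : ℝ} (ha : 0 ≤ a) (hp : 0 ≤ p) (ξ η : ℝ) :
    (4 * a + (ξ - η) ^ 2) ^ p ≤ 4 ^ p * ((a + ξ ^ 2) ^ p + (a + η ^ 2) ^ p) := by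
  have hmax : 4 * a + (ξ - η) ^ 2 ≤ 4 * max (a + ξ ^ 2) (a + η ^ 2) := by
    rcases le_total (ξ ^ 2) (η ^ 2) with h | h
    · nlinarith [le_max_right (a + ξ ^ 2) (a + η ^ 2), sq_nonneg (ξ + η)]
    · nlinarith [le_max_left (a + ξ ^ 2) (a + η ^ 2), sq_nonneg (ξ + η)]
  have hmax_rpow : max (a + ξ ^ 2) (a + η ^ 2) ^ p ≤ (a + ξ ^ 2) ^ p + (a + η ^ 2) ^ p := by
    rcases max_cases (a + ξ ^ 2) (a + η ^ 2) with ⟨h, -⟩ | ⟨h, -⟩ <;> rw [h]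
    · exact le_add_of_nonneg_right (by positivity)
    · exact le_add_of_nonneg_left (by positivity)
  calc (4 * a + (ξ - η) ^ 2) ^ p
      ≤ (4 * max (a + ξ ^ 2) (a + η ^ 2)) ^ p := by gcongr
    _ = 4 ^ p * max (a + ξ ^ 2) (a + η ^ 2) ^ p := Real.mul_rpow (by norm_num) (by positivity)
    _ ≤ 4 ^ p * ((a + ξ ^ 2) ^ p + (a + η ^ 2) ^ p) := by gcongr

/-- For `a = |κ|⁴` this is the modulus of the resolvent symbol `(iκ² ± it)^(-σ)`. -/
noncomputable def bracketWeight (a σ t : ℝ) : ℝ := (a + t ^ 2) ^ (-(σ / 2))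

variable {a σ : ℝ}

theorem bracketWeight_nonneg (ha : 0 ≤ a) (t : ℝ) : 0 ≤ bracketWeight a σ t := by
  unfold bracketWeight
  positivity

theorem continuous_bracketWeight (ha : 0 < a) : Continuous (bracketWeight a σ) :=
  (by fun_prop : Continuous fun t : ℝ => a + t ^ 2).rpow_const fun _ => .inl (by positivity)

theorem bracketWeight_sq (ha : 0 ≤ a) (t : ℝ) : bracketWeight a σ t ^ 2 = (a + t ^ 2) ^ (-σ) := by
  rw [bracketWeight, ← Real.rpow_natCast, ← Real.rpow_mul (by positivity)]
  ring_nf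

theorem bracketWeight_mul_bracketWeight_le (ha : 0 < a) (hσ : 0 ≤ σ) (ξ η : ℝ) :
    bracketWeight a σ ξ * bracketWeight a σ η ≤
      4 ^ (σ / 2) * (bracketWeight a σ ξ + bracketWeight a σ η) *
        bracketWeight (4 * a) σ (ξ - η) := by
  have h := rpow_four_mul_add_sub_sq_le ha.le (by positivity : 0 ≤ σ / 2) ξ η
  unfold bracketWeight
  rw [Real.rpow_neg (by positivity), Real.rpow_neg (by positivity), Real.rpow_neg (by positivity)]
  have hx : 0 < (a + ξ ^ 2) ^ (σ / 2) := by positivity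
  have hy : 0 < (a + η ^ 2) ^ (σ / 2) := by positivity
  have hz : 0 < (4 * a + (ξ - η) ^ 2) ^ (σ / 2) := by positivity
  generalize (a + ξ ^ 2) ^ (σ / 2) = x at *
  generalize (a + η ^ 2) ^ (σ / 2) = y at *
  generalize (4 * a + (ξ - η) ^ 2) ^ (σ / 2) = z at *
  rw [show 4 ^ (σ / 2) * (x⁻¹ + y⁻¹) * z⁻¹ = 4 ^ (σ / 2) * (x + y) / z * (x⁻¹ * y⁻¹) by
    field_simp; ring]
  exact le_mul_of_one_le_left (by positivity) ((one_le_div hz).mpr h)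

theorem integrable_rpow_neg_one_add_sq (hσ : 1 / 2 < σ) :
    Integrable fun t : ℝ => (1 + t ^ 2) ^ (-σ) := by
  simpa [div_eq_mul_inv, show -(2 * σ) * 2⁻¹ = -σ by ring] using
    integrable_rpow_neg_one_add_norm_sq (E := ℝ) (r := 2 * σ)
      (by simp only [Module.finrank_self, Nat.cast_one]; linarith)

theorem integral_rpow_neg_one_add_sq_pos (hσ : 1 / 2 < σ) :
    0 < ∫ t : ℝ, (1 + t ^ 2) ^ (-σ) :=
  integral_pos_of_integrable_nonneg_nonzero (x := 0)
    ((by fun_prop : Continuous fun t : ℝ => 1 + t ^ 2).rpow_const fun t => .inl (by positivity))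
    (integrable_rpow_neg_one_add_sq hσ) (fun t => by positivity) (by norm_num)

theorem rpow_add_mul_sqrt_sq (ha : 0 ≤ a) (σ x : ℝ) :
    (a + (√a * x) ^ 2) ^ σ = a ^ σ * (1 + x ^ 2) ^ σ := by
  rw [mul_pow, Real.sq_sqrt ha, show a + a * x ^ 2 = a * (1 + x ^ 2) by ring,
    Real.mul_rpow ha (by positivity)]

theorem integrable_bracketWeight_sq (ha : 0 < a) (hσ : 1 / 2 < σ) :
    Integrable fun t => bracketWeight a σ t ^ 2 := by
  simp_rw [bracketWeight_sq ha.le]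
  rw [← integrable_comp_mul_left_iff _ (Real.sqrt_pos.2 ha).ne']
  simp_rw [rpow_add_mul_sqrt_sq ha.le]
  exact (integrable_rpow_neg_one_add_sq hσ).const_mul _

theorem integral_bracketWeight_sq (ha : 0 < a) :
    ∫ t, bracketWeight a σ t ^ 2 = a ^ (1 / 2 - σ) * ∫ t : ℝ, (1 + t ^ 2) ^ (-σ) := by
  have h := Measure.integral_comp_mul_left (fun t => (a + t ^ 2) ^ (-σ)) √a
  simp only [rpow_add_mul_sqrt_sq ha.le, integral_const_mul,
    abs_of_pos (inv_pos.2 (Real.sqrt_pos.2 ha)), smul_eq_mul] at h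
  simp_rw [bracketWeight_sq ha.le]
  rw [sub_eq_add_neg, Real.rpow_add ha, ← Real.sqrt_eq_rpow, mul_assoc, h]
  field_simp

theorem sqrt_integral_bracketWeight_sq {w : ℝ} (hw : 0 < w) :
    √(∫ t, bracketWeight (w ^ 4) σ t ^ 2) = w ^ (1 - 2 * σ) * √(∫ t : ℝ, (1 + t ^ 2) ^ (-σ)) := by
  rw [integral_bracketWeight_sq (by positivity), Real.sqrt_mul (by positivity),
    ← Real.rpow_natCast, ← Real.rpow_mul hw.le, Real.sqrt_eq_rpow, ← Real.rpow_mul hw.le]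
  congr 2
  push_cast
  ring

end Weights

section FourierTransform

theorem norm_exp_neg_I_mul_mul (ξ x : ℝ) : ‖exp (-I * ξ * x)‖ = 1 := by
  rw [Complex.norm_exp]
  simp

theorem norm_ft_le (f : ℝ → ℂ) (ξ : ℝ) :
    ‖ft f ξ‖ ≤ (√(2 * Real.pi))⁻¹ * ∫ x, ‖f x‖ := by
  rw [ft, norm_mul, norm_inv, norm_real, Real.norm_of_nonneg (by positivity)]
  gcongr
  refine (norm_integral_le_integral_norm _).trans_eq ?_
  simp_rw [norm_mul, norm_exp_neg_I_mul_mul, one_mul]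

theorem continuous_ft {f : ℝ → ℂ} (hf : Integrable f) : Continuous (ft f) := by
  refine continuous_const.mul (continuous_of_dominated (bound := fun x => ‖f x‖)
    (fun ξ => by fun_prop) (fun ξ => ae_of_all _ fun x => ?_) hf.norm
    (ae_of_all _ fun x => by fun_prop))
  rw [norm_mul, norm_exp_neg_I_mul_mul, one_mul]

theorem integral_sq_bracketWeight_mul_norm_ft (w σ : ℝ) (f : ℝ → ℂ) :
    ∫ ζ, (bracketWeight (4 * w ^ 4) σ ζ * ‖ft f ζ‖) ^ 2 = sobNormSq w (-σ) f := by
  simp_rw [mul_pow, bracketWeight_sq (by positivity : (0:ℝ) ≤ 4 * w ^ 4)]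
  rfl

theorem integrable_sq_bracketWeight_mul_norm_ft {f : ℝ → ℂ} (hf : Integrable f) {a σ : ℝ}
    (ha : 0 < a) (hσ : 1 / 2 < σ) :
    Integrable fun ζ => (bracketWeight a σ ζ * ‖ft f ζ‖) ^ 2 := by
  simp_rw [mul_pow]
  refine (integrable_bracketWeight_sq ha hσ).mul_bdd
    (c := ((√(2 * Real.pi))⁻¹ * ∫ x, ‖f x‖) ^ 2)
    ((continuous_ft hf).norm.pow 2).aestronglyMeasurable (ae_of_all _ fun ζ => ?_)
  rw [norm_pow, norm_norm]
  exact pow_le_pow_left₀ (norm_nonneg _) (norm_ft_le f ζ) 2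

end FourierTransform

theorem norm_resolvent_symbol {κ : ℂ} (hκ : (I * κ ^ 2).im = 0) (σ t : ℝ) :
    ‖(I * κ ^ 2 + I * t) ^ ((-σ : ℝ) : ℂ)‖ = bracketWeight (‖κ‖ ^ 4) σ t := by
  have hκ_re : ‖κ‖ ^ 4 = (I * κ ^ 2).re ^ 2 := by
    rw [show ‖κ‖ ^ 4 = ‖I * κ ^ 2‖ ^ 2 by rw [norm_mul, norm_I, one_mul, norm_pow]; ring,
      Complex.sq_norm, normSq_apply, hκ]
    ring
  have hre : (I * κ ^ 2 + I * t).re = (I * κ ^ 2).re := by simp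
  have him : (I * κ ^ 2 + I * t).im = t := by simp [hκ]
  have hnorm : ‖I * κ ^ 2 + I * t‖ ^ 2 = ‖κ‖ ^ 4 + t ^ 2 := by
    rw [hκ_re, Complex.sq_norm, normSq_apply, hre, him]
    ring
  rw [norm_cpow_real, bracketWeight, ← neg_div, Real.rpow_div_two_eq_sqrt _ (by positivity),
    ← hnorm, Real.sqrt_sq (norm_nonneg _)]

theorem norm_integrand_le {σ : ℝ} (hσ : 0 ≤ σ) {κ : ℂ} (hκ : (I * κ ^ 2).im = 0) (hw : 0 < ‖κ‖)
    (f φ ψ : ℝ → ℂ) (ξ η : ℝ) :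
    ‖starRingEnd ℂ (φ ξ) * (I * κ ^ 2 + I * ξ) ^ ((-σ : ℝ) : ℂ) * ft f (ξ - η) *
        (↑(√(2 * Real.pi)))⁻¹ * (I * κ ^ 2 - I * η) ^ ((-σ : ℝ) : ℂ) * ψ η‖ ≤
      4 ^ (σ / 2) * (bracketWeight (‖κ‖ ^ 4) σ ξ + bracketWeight (‖κ‖ ^ 4) σ η) *
        (‖φ ξ‖ * (bracketWeight (4 * ‖κ‖ ^ 4) σ (ξ - η) * ‖ft f (ξ - η)‖) * ‖ψ η‖) := by
  have ha : 0 < ‖κ‖ ^ 4 := pow_pos hw 4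
  have hminus : I * κ ^ 2 - I * η = I * κ ^ 2 + I * ((-η : ℝ) : ℂ) := by push_cast; ring
  have hc : ‖((√(2 * Real.pi) : ℝ) : ℂ)⁻¹‖ ≤ 1 := by
    rw [norm_inv, norm_real, Real.norm_of_nonneg (by positivity)]
    exact inv_le_one_of_one_le₀ (Real.one_le_sqrt.2 (by nlinarith [Real.pi_gt_three]))
  have hbracket (t : ℝ) : bracketWeight (‖κ‖ ^ 4) σ (-t) = bracketWeight (‖κ‖ ^ 4) σ t := by
    simp [bracketWeight]
  rw [hminus]
  simp only [norm_mul, RCLike.norm_conj, norm_resolvent_symbol hκ, hbracket]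
  calc _ = ‖((√(2 * Real.pi) : ℝ) : ℂ)⁻¹‖ *
          (bracketWeight (‖κ‖ ^ 4) σ ξ * bracketWeight (‖κ‖ ^ 4) σ η) *
          (‖φ ξ‖ * ‖ft f (ξ - η)‖ * ‖ψ η‖) := by ring
    _ ≤ 1 * (4 ^ (σ / 2) * (bracketWeight (‖κ‖ ^ 4) σ ξ + bracketWeight (‖κ‖ ^ 4) σ η) *
          bracketWeight (4 * ‖κ‖ ^ 4) σ (ξ - η)) * (‖φ ξ‖ * ‖ft f (ξ - η)‖ * ‖ψ η‖) := by
        gcongr ?_ * ?_ * _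
        · exact mul_nonneg (bracketWeight_nonneg ha.le _) (bracketWeight_nonneg ha.le _)
        · exact bracketWeight_mul_bracketWeight_le ha hσ ξ η
    _ = _ := by ring

theorem operator_bound_general (s : ℝ) (hs0 : 0 < s) :
    ∃ C > 0, ∀ (κ : ℂ) (f : ℝ → ℂ),
      (Complex.I * κ ^ 2).im = 0 → 1 ≤ ‖κ‖ → Integrable f →
      ∀ (φ ψ : SchwartzMap ℝ ℂ),
        ‖∫ ξ : ℝ, ∫ η : ℝ,
            (starRingEnd ℂ) (φ ξ) *
              ((Complex.I * κ ^ 2 + Complex.I * (ξ : ℂ)) ^ (-(s : ℂ) - 1/2)) *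
              (ft f (ξ - η)) * (↑(Real.sqrt (2 * Real.pi)))⁻¹ *
              ((Complex.I * κ ^ 2 - Complex.I * (η : ℂ)) ^ (-(s : ℂ) - 1/2)) * ψ η‖ ≤
          C * (‖κ‖) ^ (-(2 * s)) *
            Real.sqrt (sobNormSq (‖κ‖) (-s - 1/2) f) *
            Real.sqrt (∫ ξ : ℝ, ‖φ ξ‖ ^ 2) * Real.sqrt (∫ η : ℝ, ‖ψ η‖ ^ 2) := by
  set σ := s + 1 / 2 with hσ_def
  have hσ : 1 / 2 < σ := by linarith
  have hCσ := integral_rpow_neg_one_add_sq_pos hσ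
  refine ⟨2 * 4 ^ (σ / 2) * √(∫ t : ℝ, (1 + t ^ 2) ^ (-σ)), by positivity, ?_⟩
  intro κ f hκ hκ1 hf φ ψ
  have hw : 0 < ‖κ‖ := by linarith
  have ha : 0 < ‖κ‖ ^ 4 := pow_pos hw 4
  have ha4 : 0 < 4 * ‖κ‖ ^ 4 := by linarith
  refine (norm_integral_integral_le_of_le_weighted_conv (c := 4 ^ (σ / 2))
    (u := fun ξ => ‖φ ξ‖) (v := fun η => ‖ψ η‖) (a := bracketWeight (‖κ‖ ^ 4) σ)
    (g := fun ζ => bracketWeight (4 * ‖κ‖ ^ 4) σ ζ * ‖ft f ζ‖) (by positivity)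
    (by fun_prop) (by fun_prop) (continuous_bracketWeight ha).measurable
    ((continuous_bracketWeight ha4).mul (continuous_ft hf).norm).measurable
    (fun _ => norm_nonneg _) (fun _ => norm_nonneg _) (bracketWeight_nonneg ha.le)
    (fun _ => mul_nonneg (bracketWeight_nonneg ha4.le _) (norm_nonneg _))
    ((φ.memLp 2).integrable_norm_pow two_ne_zero) ((ψ.memLp 2).integrable_norm_pow two_ne_zero)
    (integrable_bracketWeight_sq ha hσ) (integrable_sq_bracketWeight_mul_norm_ft hf ha4 hσ)
    fun ξ η => ?_).trans_eq ?_
  · rw [show (-(s : ℂ) - 1 / 2) = ((-σ : ℝ) : ℂ) by rw [hσ_def]; push_cast; ring]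
    exact norm_integrand_le (by positivity) hκ hw f φ ψ ξ η
  · rw [sqrt_integral_bracketWeight_sq hw, integral_sq_bracketWeight_mul_norm_ft,
      show 1 - 2 * σ = -(2 * s) by rw [hσ_def]; ring, show -σ = -s - 1 / 2 by rw [hσ_def]; ring]
    ring

/-- The operator bound `‖(∂+iκ²)^{-s-1/2} f (∂-iκ²)^{-s-1/2}‖_op ≲ |κ|^{-2s} ‖f‖_{H^{-s-1/2}_κ}`,
expressed on the Fourier side: the bilinear form of the operator against (Fourier transforms of)
test functions `φ, ψ` is bounded by `C |κ|^{-2s} ‖f‖_{H^{-s-1/2}_κ} ‖φ‖_{L²} ‖ψ‖_{L²}`. -/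
theorem operator_bound (s : ℝ) (hs0 : 0 < s) (hs1 : s < 1/2) :
    ∃ C > 0, ∀ (κ : ℂ) (f : ℝ → ℂ),
      (Complex.I * κ ^ 2).im = 0 → 1 ≤ ‖κ‖ → Integrable f →
      ∀ (φ ψ : SchwartzMap ℝ ℂ),
        ‖∫ ξ : ℝ, ∫ η : ℝ,
            (starRingEnd ℂ) (φ ξ) *
              ((Complex.I * κ ^ 2 + Complex.I * (ξ : ℂ)) ^ (-(s : ℂ) - 1/2)) *
              (ft f (ξ - η)) * (↑(Real.sqrt (2 * Real.pi)))⁻¹ *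
              ((Complex.I * κ ^ 2 - Complex.I * (η : ℂ)) ^ (-(s : ℂ) - 1/2)) * ψ η‖ ≤
          C * (‖κ‖) ^ (-(2 * s)) *
            Real.sqrt (sobNormSq (‖κ‖) (-s - 1/2) f) *
            Real.sqrt (∫ ξ : ℝ, ‖φ ξ‖ ^ 2) * Real.sqrt (∫ η : ℝ, ‖ψ η‖ ^ 2) :=
  operator_bound_general s hs0
end

section
/- Suppose smooth functions γ(·;κ), g₁₂(·;κ), g₂₁(·;κ) satisfy γ'(κ) = 2κ(q g₂₁(κ) - r g₁₂(κ)), g₁₂'(κ) = -2iκ²g₁₂(κ) - κq(γ(κ)+1), g₂₁'(κ) = 2iκ²g₂₁(κ) + κr(γ(κ)+1), and similarly at parameter ϰ. Then for κ² ≠ ϰ², the identity ((κ²-ϰ²)/κ²)[g₁₂'(κ)g₂₁(ϰ) + g₂₁'(κ)g₁₂(ϰ)] = [g₁₂(κ)g₂₁(ϰ) + g₂₁(κ)g₁₂(ϰ)]' + (ϰ/(2κ))[(γ(κ)+1)(γ(ϰ)+1)]' holds pointwise. -/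
open Complex

/-! Write `A` for `g₁₂'(κ)g₂₁(ϰ) + g₂₁'(κ)g₁₂(ϰ)`, `B` for `g₁₂(κ)g₂₁'(ϰ) + g₂₁(κ)g₁₂'(ϰ)` and
`Γ = (γ(κ)+1)(γ(ϰ)+1)`. Substituting the system, the terms `±2iκ²`, `±2iϰ²` cancel in
`ϰ²A + κ²B` against each other and the potential terms against those of `Γ'`, leaving the
polynomial identity `2ϰ²A + 2κ²B + κϰΓ' = 0`. Since the pairing has derivative `A + B`,
dividing by `κ²` gives the claim. -/

structure SolvesMicroSystem (q r : ℝ → ℂ) (κ : ℂ) (γ g12 g21 : ℝ → ℂ) : Prop where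
  hasDerivAt_γ : ∀ x, HasDerivAt γ (2 * κ * (q x * g21 x - r x * g12 x)) x
  hasDerivAt_g12 : ∀ x, HasDerivAt g12 (-2 * I * κ ^ 2 * g12 x - κ * q x * (γ x + 1)) x
  hasDerivAt_g21 : ∀ x, HasDerivAt g21 (2 * I * κ ^ 2 * g21 x + κ * r x * (γ x + 1)) x

theorem deriv_mul_add_mul {f₁ g₁ f₂ g₂ : ℝ → ℂ} {x : ℝ}
    (hf₁ : DifferentiableAt ℝ f₁ x) (hg₁ : DifferentiableAt ℝ g₁ x)
    (hf₂ : DifferentiableAt ℝ f₂ x) (hg₂ : DifferentiableAt ℝ g₂ x) :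
    deriv (fun y => f₁ y * g₁ y + f₂ y * g₂ y) x =
      (deriv f₁ x * g₁ x + deriv f₂ x * g₂ x) + (f₁ x * deriv g₁ x + f₂ x * deriv g₂ x) := by
  have h : deriv (fun y => f₁ y * g₁ y + f₂ y * g₂ y) x = _ :=
    ((hf₁.hasDerivAt.mul hg₁.hasDerivAt).add (hf₂.hasDerivAt.mul hg₂.hasDerivAt)).deriv
  rw [h]
  ring

namespace SolvesMicroSystem

variable {q r γκ γϰ g12κ g12ϰ g21κ g21ϰ : ℝ → ℂ} {κ ϰ : ℂ}

theorem pairing_identity (hκ : SolvesMicroSystem q r κ γκ g12κ g21κ)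
    (hϰ : SolvesMicroSystem q r ϰ γϰ g12ϰ g21ϰ) (x : ℝ) :
    2 * ϰ ^ 2 * (deriv g12κ x * g21ϰ x + deriv g21κ x * g12ϰ x) +
        2 * κ ^ 2 * (g12κ x * deriv g21ϰ x + g21κ x * deriv g12ϰ x) +
          κ * ϰ * deriv (fun y => (γκ y + 1) * (γϰ y + 1)) x = 0 := by
  have hΓ : deriv (fun y => (γκ y + 1) * (γϰ y + 1)) x = _ :=
    (((hκ.hasDerivAt_γ x).add_const 1).mul ((hϰ.hasDerivAt_γ x).add_const 1)).deriv
  rw [hΓ, (hκ.hasDerivAt_g12 x).deriv, (hκ.hasDerivAt_g21 x).deriv,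
    (hϰ.hasDerivAt_g12 x).deriv, (hϰ.hasDerivAt_g21 x).deriv]
  ring

end SolvesMicroSystem

theorem micro_As_commute_general
    (q r γκ γϰ g12κ g12ϰ g21κ g21ϰ : ℝ → ℂ) (κ ϰ : ℂ)
    (hκ0 : κ ≠ 0)
    (hγκ : ∀ x, HasDerivAt γκ (2 * κ * (q x * g21κ x - r x * g12κ x)) x)
    (hg12κ : ∀ x, HasDerivAt g12κ (-2 * Complex.I * κ ^ 2 * g12κ x - κ * q x * (γκ x + 1)) x)
    (hg21κ : ∀ x, HasDerivAt g21κ (2 * Complex.I * κ ^ 2 * g21κ x + κ * r x * (γκ x + 1)) x)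
    (hγϰ : ∀ x, HasDerivAt γϰ (2 * ϰ * (q x * g21ϰ x - r x * g12ϰ x)) x)
    (hg12ϰ : ∀ x, HasDerivAt g12ϰ (-2 * Complex.I * ϰ ^ 2 * g12ϰ x - ϰ * q x * (γϰ x + 1)) x)
    (hg21ϰ : ∀ x, HasDerivAt g21ϰ (2 * Complex.I * ϰ ^ 2 * g21ϰ x + ϰ * r x * (γϰ x + 1)) x) :
    ∀ x : ℝ,
      ((κ ^ 2 - ϰ ^ 2) / κ ^ 2) * (deriv g12κ x * g21ϰ x + deriv g21κ x * g12ϰ x) =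
        deriv (fun y => g12κ y * g21ϰ y + g21κ y * g12ϰ y) x +
          (ϰ / (2 * κ)) * deriv (fun y => (γκ y + 1) * (γϰ y + 1)) x := by
  intro x
  have hκ : SolvesMicroSystem q r κ γκ g12κ g21κ := ⟨hγκ, hg12κ, hg21κ⟩
  have hϰ : SolvesMicroSystem q r ϰ γϰ g12ϰ g21ϰ := ⟨hγϰ, hg12ϰ, hg21ϰ⟩
  rw [deriv_mul_add_mul (hg12κ x).differentiableAt (hg21ϰ x).differentiableAt
    (hg21κ x).differentiableAt (hg12ϰ x).differentiableAt]
  field_simp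
  linear_combination -(hκ.pairing_identity hϰ x)

/-- The commuting-flow identity: if `γ, g₁₂, g₂₁` satisfy the microscopic ODE system at the
parameters `κ` and `ϰ` (with `iκ², iϰ²` real, `κ, ϰ ≠ 0`, `κ² ≠ ϰ²`), then
`((κ²-ϰ²)/κ²)[g₁₂'(κ)g₂₁(ϰ) + g₂₁'(κ)g₁₂(ϰ)]
  = [g₁₂(κ)g₂₁(ϰ) + g₂₁(κ)g₁₂(ϰ)]' + (ϰ/(2κ))[(γ(κ)+1)(γ(ϰ)+1)]'` pointwise. -/
theorem micro_As_commute
    (q r γκ γϰ g12κ g12ϰ g21κ g21ϰ : ℝ → ℂ) (κ ϰ : ℂ)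
    (hκ0 : κ ≠ 0) (hϰ0 : ϰ ≠ 0) (hne : κ ^ 2 ≠ ϰ ^ 2)
    (hiκ : (Complex.I * κ ^ 2).im = 0) (hiϰ : (Complex.I * ϰ ^ 2).im = 0)
    (hγκ : ∀ x, HasDerivAt γκ (2 * κ * (q x * g21κ x - r x * g12κ x)) x)
    (hg12κ : ∀ x, HasDerivAt g12κ (-2 * Complex.I * κ ^ 2 * g12κ x - κ * q x * (γκ x + 1)) x)
    (hg21κ : ∀ x, HasDerivAt g21κ (2 * Complex.I * κ ^ 2 * g21κ x + κ * r x * (γκ x + 1)) x)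
    (hγϰ : ∀ x, HasDerivAt γϰ (2 * ϰ * (q x * g21ϰ x - r x * g12ϰ x)) x)
    (hg12ϰ : ∀ x, HasDerivAt g12ϰ (-2 * Complex.I * ϰ ^ 2 * g12ϰ x - ϰ * q x * (γϰ x + 1)) x)
    (hg21ϰ : ∀ x, HasDerivAt g21ϰ (2 * Complex.I * ϰ ^ 2 * g21ϰ x + ϰ * r x * (γϰ x + 1)) x) :
    ∀ x : ℝ,
      ((κ ^ 2 - ϰ ^ 2) / κ ^ 2) * (deriv g12κ x * g21ϰ x + deriv g21κ x * g12ϰ x) =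
        deriv (fun y => g12κ y * g21ϰ y + g21κ y * g12ϰ y) x +
          (ϰ / (2 * κ)) * deriv (fun y => (γκ y + 1) * (γϰ y + 1)) x :=
  micro_As_commute_general q r γκ γϰ g12κ g12ϰ g21κ g21ϰ κ ϰ hκ0 hγκ hg12κ hg21κ hγϰ hg12ϰ hg21ϰ
end

section
/- Under the hypotheses of the microscopic ODE system (γ' = 2κ(qg₂₁ - rg₁₂), g₁₂' = -2iκ²g₁₂ - κq(γ+1), g₂₁' = 2iκ²g₂₁ + κr(γ+1)), if moreover γ, g₁₂, g₂₁ vanish at infinity, then the pointwise quadratic identity γ + γ²/2 = -2 g₁₂ g₂₁ holds on ℝ. -/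
open Complex Filter

/-!
The quantity `γ + γ²/2 + 2 g₁₂ g₂₁` is a first integral of the system: in `(g₁₂ g₂₁)'` the
rotation terms `∓2iκ²` cancel, and the remaining forcing terms `κ(γ+1)(r g₁₂ - q g₂₁)` cancel
against `(1 + γ) γ'`. Being constant and vanishing at infinity, it vanishes identically.
-/

theorem eq_of_hasDerivAt_zero_of_tendsto {E : Type*} [NormedAddCommGroup E] [NormedSpace ℝ E]
    {f : ℝ → E} {l : Filter ℝ} [l.NeBot] {c : E} (hf : ∀ x, HasDerivAt f 0 x)
    (hlim : Tendsto f l (nhds c)) (x : ℝ) : f x = c := by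
  have hconst : f = fun _ => f x :=
    funext fun y => is_const_of_deriv_eq_zero (fun z => (hf z).differentiableAt)
      (fun z => (hf z).deriv) y x
  rw [hconst] at hlim
  exact tendsto_nhds_unique tendsto_const_nhds hlim

noncomputable def quadraticInvariant (γ g12 g21 : ℝ → ℂ) (x : ℝ) : ℂ :=
  γ x + γ x ^ 2 / 2 + 2 * (g12 x * g21 x)

section MicroscopicSystem

variable {q r γ g12 g21 : ℝ → ℂ} {κ : ℂ}

theorem hasDerivAt_quadraticInvariant
    (hγ : ∀ x, HasDerivAt γ (2 * κ * (q x * g21 x - r x * g12 x)) x)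
    (hg12 : ∀ x, HasDerivAt g12 (-2 * Complex.I * κ ^ 2 * g12 x - κ * q x * (γ x + 1)) x)
    (hg21 : ∀ x, HasDerivAt g21 (2 * Complex.I * κ ^ 2 * g21 x + κ * r x * (γ x + 1)) x)
    (x : ℝ) : HasDerivAt (quadraticInvariant γ g12 g21) 0 x := by
  refine (((hγ x).fun_add ((hγ x).fun_pow 2 |>.div_const 2)).fun_add
    (((hg12 x).fun_mul (hg21 x)).const_mul 2)).congr_deriv ?_
  norm_num
  ring

theorem tendsto_quadraticInvariant {l : Filter ℝ} (hγ : Tendsto γ l (nhds 0))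
    (hg12 : Tendsto g12 l (nhds 0)) (hg21 : Tendsto g21 l (nhds 0)) :
    Tendsto (quadraticInvariant γ g12 g21) l (nhds 0) := by
  have h := (hγ.add ((hγ.pow 2).div_const 2)).add ((hg12.mul hg21).const_mul 2)
  norm_num at h
  exact h

end MicroscopicSystem

theorem quadratic_identity_general
    (q : SchwartzMap ℝ ℂ) (r : ℝ → ℂ)
    (κ : ℂ)
    (γ g12 g21 : ℝ → ℂ)
    (hγ : ∀ x, HasDerivAt γ (2 * κ * (q x * g21 x - r x * g12 x)) x)
    (hg12 : ∀ x, HasDerivAt g12 (-2 * Complex.I * κ ^ 2 * g12 x - κ * q x * (γ x + 1)) x)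
    (hg21 : ∀ x, HasDerivAt g21 (2 * Complex.I * κ ^ 2 * g21 x + κ * r x * (γ x + 1)) x)
    (hγ0 : Tendsto γ (cocompact ℝ) (nhds 0))
    (hg120 : Tendsto g12 (cocompact ℝ) (nhds 0))
    (hg210 : Tendsto g21 (cocompact ℝ) (nhds 0)) :
    ∀ x : ℝ, γ x + (γ x) ^ 2 / 2 = -2 * g12 x * g21 x := by
  intro x
  have hzero : quadraticInvariant γ g12 g21 x = 0 :=
    eq_of_hasDerivAt_zero_of_tendsto (hasDerivAt_quadraticInvariant hγ hg12 hg21)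
      (tendsto_quadraticInvariant hγ0 hg120 hg210) x
  unfold quadraticInvariant at hzero
  linear_combination hzero

/-- Quadratic identity: if `γ, g₁₂, g₂₁` satisfy the microscopic ODE system
(`γ' = 2κ(qg₂₁ - rg₁₂)`, `g₁₂' = -2iκ²g₁₂ - κq(γ+1)`, `g₂₁' = 2iκ²g₂₁ + κr(γ+1)`) with
`q` Schwartz, `r = -q̄`, `iκ² ∈ ℝ`, `|κ| ≥ 1`, and `γ, g₁₂, g₂₁` vanish at infinity, then
`γ + γ²/2 = -2 g₁₂ g₂₁` on all of `ℝ`. -/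
theorem quadratic_identity
    (q : SchwartzMap ℝ ℂ) (r : ℝ → ℂ) (hr : r = fun x => -(starRingEnd ℂ) (q x))
    (κ : ℂ) (hiκ : (Complex.I * κ ^ 2).im = 0) (hκ1 : 1 ≤ ‖κ‖)
    (γ g12 g21 : ℝ → ℂ)
    (hγ : ∀ x, HasDerivAt γ (2 * κ * (q x * g21 x - r x * g12 x)) x)
    (hg12 : ∀ x, HasDerivAt g12 (-2 * Complex.I * κ ^ 2 * g12 x - κ * q x * (γ x + 1)) x)
    (hg21 : ∀ x, HasDerivAt g21 (2 * Complex.I * κ ^ 2 * g21 x + κ * r x * (γ x + 1)) x)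
    (hγ0 : Tendsto γ (cocompact ℝ) (nhds 0))
    (hg120 : Tendsto g12 (cocompact ℝ) (nhds 0))
    (hg210 : Tendsto g21 (cocompact ℝ) (nhds 0)) :
    ∀ x : ℝ, γ x + (γ x) ^ 2 / 2 = -2 * g12 x * g21 x :=
  quadratic_identity_general q r κ γ g12 g21 hγ hg12 hg21 hγ0 hg120 hg210
end
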